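/- Let A be a smooth 1-form on ℝⁿ satisfying ∂ᵢAⱼ + ∂ⱼAᵢ = δᵢⱼH₁ for some smooth function H₁, where additionally H₁(x) = a·Σᵢ(xⁱ)² + Σᵢ Bᵢxⁱ + c with constants a, Bᵢ, c. Then a = 0, and A has the form Aᵢ = (1/2)(Σⱼ Bⱼxʲxⁱ − (Bᵢ/2)Σⱼ(xʲ)² + c·xⁱ + Σₖ d_{ik}xᵏ + fᵢ) with constants d_{ik} = −d_{ki} and fᵢ. -/

import Mathlib

noncomputable section
open scoped BigOperators

/-- Partial derivative in the `i`-th coordinate direction. -/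
def pd {n : ℕ} (i : Fin n) (f : (Fin n → ℝ) → ℝ) (x : Fin n → ℝ) : ℝ :=
  fderiv ℝ f x (Pi.single i 1)


variable {n : ℕ}

lemma pd_congr {f g : (Fin n → ℝ) → ℝ} (h : ∀ x, f x = g x) (i : Fin n) (x : Fin n → ℝ) :
    pd i f x = pd i g x := by
  rw [show f = g from funext h]

lemma pd_hasFDeriv {f : (Fin n → ℝ) → ℝ} {L : (Fin n → ℝ) →L[ℝ] ℝ} {x : Fin n → ℝ}
    (h : HasFDerivAt f L x) (i : Fin n) : pd i f x = L (Pi.single i 1) := by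
  rw [pd, h.fderiv]

lemma pd_smooth {f : (Fin n → ℝ) → ℝ} (hf : ContDiff ℝ (⊤ : ℕ∞) f) (i : Fin n) :
    ContDiff ℝ (⊤ : ℕ∞) (pd i f) := by
  exact (ContinuousLinearMap.apply ℝ ℝ (Pi.single i 1)).contDiff.comp
    (hf.fderiv_right (m := (⊤ : ℕ∞)) (by exact_mod_cast (le_top : (⊤ : ℕ∞) + 1 ≤ ⊤)))

lemma pd_comm {f : (Fin n → ℝ) → ℝ} (hf : ContDiff ℝ (⊤ : ℕ∞) f) (i j : Fin n) (x : Fin n → ℝ) :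
    pd i (pd j f) x = pd j (pd i f) x := by
  have hd : Differentiable ℝ f := hf.differentiable (by simp)
  have hd2 : Differentiable ℝ (fderiv ℝ f) :=
    (hf.fderiv_right (m := 1) ((WithTop.coe_le_coe.mpr (le_top : ((1 + 1 : ℕ) : ℕ∞) ≤ ⊤)))).differentiable (by simp)
  have hsym : ∀ v w, fderiv ℝ (fderiv ℝ f) x v w = fderiv ℝ (fderiv ℝ f) x w v :=
    second_derivative_symmetric (fun y => (hd y).hasFDerivAt) (hd2 x).hasFDerivAt
  have key : ∀ (k : Fin n) (v : Fin n → ℝ),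
      pd k (fun y => fderiv ℝ f y v) x = fderiv ℝ (fderiv ℝ f) x (Pi.single k 1) v := by
    intro k v
    have : HasFDerivAt (fun y => fderiv ℝ f y v)
        ((ContinuousLinearMap.apply ℝ ℝ v).comp (fderiv ℝ (fderiv ℝ f) x)) x :=
      (ContinuousLinearMap.apply ℝ ℝ v).hasFDerivAt.comp x (hd2 x).hasFDerivAt
    rw [pd_hasFDeriv this]
    rfl
  calc pd i (pd j f) x = fderiv ℝ (fderiv ℝ f) x (Pi.single i 1) (Pi.single j 1) := key i _
    _ = fderiv ℝ (fderiv ℝ f) x (Pi.single j 1) (Pi.single i 1) := hsym _ _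
    _ = pd j (pd i f) x := (key j _).symm

lemma pd_sub {f g : (Fin n → ℝ) → ℝ} {x : Fin n → ℝ} (hf : DifferentiableAt ℝ f x)
    (hg : DifferentiableAt ℝ g x) (i : Fin n) :
    pd i (fun y => f y - g y) x = pd i f x - pd i g x := by
  rw [pd_hasFDeriv (hf.hasFDerivAt.fun_sub hg.hasFDerivAt)]
  simp [pd]

lemma const_of_pd_zero {f : (Fin n → ℝ) → ℝ} (hf : Differentiable ℝ f)
    (h : ∀ (k : Fin n) (x : Fin n → ℝ), pd k f x = 0) (x : Fin n → ℝ) : f x = f 0 := by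
  apply is_const_of_fderiv_eq_zero hf
  intro y
  ext v
  have hv : v = ∑ k, v k • (Pi.single k (1:ℝ) : Fin n → ℝ) := by
    funext j
    simp [Pi.single_apply]
  rw [ContinuousLinearMap.zero_apply, hv, map_sum]
  simp only [map_smul]
  rw [Finset.sum_eq_zero]
  intro k _
  have := h k y
  rw [pd] at this
  simp [this]

lemma pd_add {f g : (Fin n → ℝ) → ℝ} (hf : DifferentiableAt ℝ f x) (hg : DifferentiableAt ℝ g x)
    (i : Fin n) :
    pd i (fun y => f y + g y) x = pd i f x + pd i g x := by
  rw [pd_hasFDeriv (hf.hasFDerivAt.fun_add hg.hasFDerivAt)]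
  simp [pd]

lemma pd_mul {f g : (Fin n → ℝ) → ℝ} {x : Fin n → ℝ}
    (hf : DifferentiableAt ℝ f x) (hg : DifferentiableAt ℝ g x) (i : Fin n) :
    pd i (fun y => f y * g y) x = pd i f x * g x + f x * pd i g x := by
  rw [pd_hasFDeriv (hf.hasFDerivAt.fun_mul hg.hasFDerivAt)]
  simp [pd]
  ring

lemma pd_const (c : ℝ) (i : Fin n) (x : Fin n → ℝ) : pd i (fun _ => c) x = 0 := by
  rw [pd_hasFDeriv (hasFDerivAt_const c x)]
  simp

lemma pd_proj (j i : Fin n) (x : Fin n → ℝ) :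
    pd i (fun y => y j) x = if j = i then 1 else 0 := by
  rw [pd_hasFDeriv (hasFDerivAt_apply j x)]
  simp [Pi.single_apply]

lemma pd_sum {ι : Type*} (s : Finset ι) (f : ι → (Fin n → ℝ) → ℝ) {x : Fin n → ℝ}
    (hf : ∀ j ∈ s, DifferentiableAt ℝ (f j) x) (i : Fin n) :
    pd i (fun y => ∑ j ∈ s, f j y) x = ∑ j ∈ s, pd i (f j) x := by
  rw [pd_hasFDeriv (HasFDerivAt.fun_sum (fun j hj => (hf j hj).hasFDerivAt))]
  simp [pd]

lemma pd_const_mul {f : (Fin n → ℝ) → ℝ} {x : Fin n → ℝ} (c : ℝ)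
    (hf : DifferentiableAt ℝ f x) (i : Fin n) :
    pd i (fun y => c * f y) x = c * pd i f x := by
  rw [pd_mul (differentiableAt_const c) hf, pd_const]
  ring

lemma pd_sq (j i : Fin n) (x : Fin n → ℝ) :
    pd i (fun y => (y j)^2) x = if j = i then 2 * x j else 0 := by
  have h1 : DifferentiableAt ℝ (fun y : Fin n → ℝ => y j) x := by fun_prop
  rw [pd_congr (fun y => by ring : ∀ y : Fin n → ℝ, (y j)^2 = y j * y j),
    pd_mul h1 h1, pd_proj]
  split <;> simp <;> ring

lemma pd_H (a c : ℝ) (B : Fin n → ℝ) (k : Fin n) (x : Fin n → ℝ) :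
    pd k (fun x : Fin n → ℝ => a * (∑ m, (x m)^2) + (∑ m, B m * x m) + c) x
      = 2*a*(x k) + B k := by
  simp (disch := intros; fun_prop) only [pd_add, pd_const_mul, pd_sum, pd_const, pd_sq,
    pd_proj, pd_mul]
  simp [Finset.sum_ite_eq', mul_ite]
  ring

lemma pd_affine1 (α β : ℝ) (m l : Fin n) (x : Fin n → ℝ) :
    pd l (fun y => α * y m + β) x = α * (if m = l then 1 else 0) := by
  simp (disch := intros; fun_prop) only [pd_add, pd_const_mul, pd_const, pd_proj]
  ring

lemma pd_P (B : Fin n → ℝ) (c e Bi : ℝ) (v : Fin n → ℝ) (i k : Fin n) (x : Fin n → ℝ) :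
    pd k (fun y => (1/2) * ((∑ j, B j * y j) * y i - Bi / 2 * (∑ j, (y j)^2)
        + c * y i + (∑ m, v m * y m) + e)) x
    = (1/2) * (B k * x i + (if i = k then 1 else 0) * (∑ j, B j * x j)
        - Bi * x k + c * (if i = k then 1 else 0) + v k) := by
  simp (disch := intros; fun_prop) only [pd_add, pd_const_mul, pd_sum, pd_const, pd_sq,
    pd_proj, pd_mul, pd_sub]
  simp [Finset.sum_ite_eq', mul_ite]
  ring

lemma pd_R (B : Fin n → ℝ) (e Bi Bk δ : ℝ) (i k l : Fin n) (x : Fin n → ℝ) :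
    pd l (fun y => (1/2) * (Bk * y i + δ * (∑ j, B j * y j) - Bi * y k + e)) x
    = (1/2) * (Bk * (if i = l then 1 else 0) + δ * B l - Bi * (if k = l then 1 else 0)) := by
  simp (disch := intros; fun_prop) only [pd_add, pd_const_mul, pd_sum, pd_const, pd_sq,
    pd_proj, pd_mul, pd_sub]
  simp [Finset.sum_ite_eq', mul_ite]
  try ring

/-- if a smooth 1-form `A` on `ℝⁿ` satisfies
`∂ᵢAⱼ + ∂ⱼAᵢ = δᵢⱼH₁` with `H₁ = a|x|² + ΣBᵢxⁱ + c`, then `a = 0` and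
`Aᵢ = (1/2)(ΣⱼBⱼxʲxⁱ − (Bᵢ/2)|x|² + cxⁱ + Σₖd_{ik}xᵏ + fᵢ)` with `d` skew-symmetric. -/
theorem stmt17 {n : ℕ} (hn : 2 ≤ n)
    (A : Fin n → (Fin n → ℝ) → ℝ) (hA : ∀ i, ContDiff ℝ (⊤ : ℕ∞) (A i))
    (a c : ℝ) (B : Fin n → ℝ)
    (heq : ∀ (i j : Fin n) (x : Fin n → ℝ),
      pd i (A j) x + pd j (A i) x
        = (if i = j then (1:ℝ) else 0)
            * (a * (∑ k, (x k)^2) + (∑ k, B k * x k) + c)) :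
    a = 0 ∧
    ∃ (d : Fin n → Fin n → ℝ) (f : Fin n → ℝ),
      (∀ i k, d k i = - d i k) ∧
      ∀ i x, A i x = (1/2) * ((∑ j, B j * x j) * x i
        - B i / 2 * (∑ j, (x j)^2) + c * x i + (∑ k, d i k * x k) + f i) := by
  have hd_pd : ∀ p r, Differentiable ℝ (pd r (A p)) :=
    fun p r => (pd_smooth (hA p) r).differentiable (by simp)
  have flip : ∀ p q : Fin n, (if p = q then (1:ℝ) else 0) = if q = p then 1 else 0 := by
    intro p q; by_cases h : p = q <;> simp [h, eq_comm]
  have E1 : ∀ p q r (x : Fin n → ℝ), pd r (pd q (A p)) x + pd r (pd p (A q)) x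
      = (if p = q then (1:ℝ) else 0) * (2*a*(x r) + B r) := by
    intro p q r x
    have hcg : ∀ y, pd q (A p) y
        = (if p = q then (1:ℝ) else 0) * (a * (∑ m, (y m)^2) + (∑ m, B m * y m) + c)
          - pd p (A q) y := by
      intro y; linarith [heq p q y]
    rw [pd_congr hcg r, pd_sub (by fun_prop) (hd_pd q p x),
      pd_const_mul _ (by fun_prop), pd_H]
    ring
  have E2 : ∀ p q r (x : Fin n → ℝ), pd r (pd q (A p)) x = pd q (pd r (A p)) x :=
    fun p q r x => pd_comm (hA p) r q x
  have Tform : ∀ p q r (x : Fin n → ℝ), 2 * pd r (pd q (A p)) x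
      = (if p = r then (1:ℝ) else 0) * (2*a*(x q) + B q)
        + (if p = q then (1:ℝ) else 0) * (2*a*(x r) + B r)
        - (if q = r then (1:ℝ) else 0) * (2*a*(x p) + B p) := by
    intro p q r x
    have h1 := E2 p q r x
    have h2 := E1 p r q x
    have h3 := E2 r p q x
    have h4 := E1 r q p x
    have h5 := E2 q r p x
    have h6 := E1 q p r x
    rw [flip r q] at h4
    rw [flip q p] at h6
    linarith
  -- derive a = 0
  have ha : a = 0 := by
    set i0 : Fin n := ⟨0, by omega⟩ with hi0
    set j0 : Fin n := ⟨1, by omega⟩ with hj0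
    have hne : i0 ≠ j0 := by simp [hi0, hj0, Fin.ext_iff]
    have h7 : ∀ y : Fin n → ℝ, pd j0 (pd j0 (A i0)) y = (-a) * y i0 + (-(B i0) / 2) := by
      intro y
      have h := Tform i0 j0 j0 y
      simp [if_neg hne] at h
      linarith
    have h8 : ∀ y : Fin n → ℝ, pd i0 (pd j0 (A i0)) y = a * y j0 + B j0 / 2 := by
      intro y
      have h := Tform i0 j0 i0 y
      simp [if_neg hne, if_neg (Ne.symm hne)] at h
      linarith
    have h9 : pd i0 (pd j0 (pd j0 (A i0))) 0 = -a := by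
      rw [pd_congr h7, pd_affine1]
      simp
    have h10 : pd j0 (pd i0 (pd j0 (A i0))) 0 = a := by
      rw [pd_congr h8, pd_affine1]
      simp
    have hc := pd_comm (pd_smooth (hA i0) j0) i0 j0 0
    rw [h9, h10] at hc
    linarith
  subst ha
  refine ⟨rfl, fun p r => pd r (A p) 0 - pd p (A r) 0, fun p => 2 * A p 0, ?_, ?_⟩
  · intro p k; ring
  · intro p x
    have Tc : ∀ p q r (z : Fin n → ℝ), 2 * pd r (pd q (A p)) z
        = (if p = r then (1:ℝ) else 0) * B q + (if p = q then (1:ℝ) else 0) * B r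
          - (if q = r then (1:ℝ) else 0) * B p := by
      intro p q r z
      have h := Tform p q r z
      simp only [mul_zero, zero_mul, zero_add] at h
      exact h
    have hm : ∀ p r : Fin n, pd r (A p) 0 + pd p (A r) 0
        = c * (if p = r then (1:ℝ) else 0) := by
      intro p r
      have h := heq r p 0
      rw [flip r p] at h
      simpa [mul_comm] using h
    have int1 : ∀ (p r : Fin n) (z : Fin n → ℝ), pd r (A p) z
        = (1/2) * (B r * z p + (if p = r then (1:ℝ) else 0) * (∑ j, B j * z j) - B p * z r
            + (c * (if p = r then (1:ℝ) else 0) + (pd r (A p) 0 - pd p (A r) 0))) := by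
      intro p r z
      have hdiffR : Differentiable ℝ (fun y : Fin n → ℝ => (1/2) * (B r * y p
          + (if p = r then (1:ℝ) else 0) * (∑ j, B j * y j) - B p * y r
          + (c * (if p = r then (1:ℝ) else 0) + (pd r (A p) 0 - pd p (A r) 0)))) := by fun_prop
      have hg0 : ∀ (l : Fin n) (z : Fin n → ℝ), pd l (fun y => pd r (A p) y
          - (1/2) * (B r * y p + (if p = r then (1:ℝ) else 0) * (∑ j, B j * y j) - B p * y r
          + (c * (if p = r then (1:ℝ) else 0) + (pd r (A p) 0 - pd p (A r) 0)))) z = 0 := by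
        intro l z
        rw [pd_sub (hd_pd p r z) (hdiffR z), pd_R]
        have h := Tc p r l z
        linarith
      have hgc := const_of_pd_zero ((hd_pd p r).fun_sub hdiffR) hg0 z
      have hR0 : (1/2) * (B r * (0 : Fin n → ℝ) p
          + (if p = r then (1:ℝ) else 0) * (∑ j, B j * (0 : Fin n → ℝ) j) - B p * (0 : Fin n → ℝ) r
          + (c * (if p = r then (1:ℝ) else 0) + (pd r (A p) 0 - pd p (A r) 0)))
          = (1/2) * (c * (if p = r then (1:ℝ) else 0) + (pd r (A p) 0 - pd p (A r) 0)) := by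
        simp
      rw [hR0] at hgc
      have h0 := hm p r
      linarith
    have hdiffP : Differentiable ℝ (fun y : Fin n → ℝ => (1/2) * ((∑ j, B j * y j) * y p
        - B p / 2 * (∑ j, (y j)^2) + c * y p
        + (∑ m, (pd m (A p) 0 - pd p (A m) 0) * y m) + 2 * A p 0)) := by fun_prop
    have hg0 : ∀ (l : Fin n) (z : Fin n → ℝ), pd l (fun y => A p y
        - (1/2) * ((∑ j, B j * y j) * y p - B p / 2 * (∑ j, (y j)^2) + c * y p
        + (∑ m, (pd m (A p) 0 - pd p (A m) 0) * y m) + 2 * A p 0)) z = 0 := by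
      intro l z
      rw [pd_sub (((hA p).differentiable (by simp)) z) (hdiffP z), pd_P]
      have h := int1 p l z
      linarith
    have hgc := const_of_pd_zero (((hA p).differentiable (by simp)).fun_sub hdiffP) hg0 x
    have hP0 : (1/2) * ((∑ j, B j * (0 : Fin n → ℝ) j) * (0 : Fin n → ℝ) p
        - B p / 2 * (∑ j, ((0 : Fin n → ℝ) j)^2) + c * (0 : Fin n → ℝ) p
        + (∑ m, (pd m (A p) 0 - pd p (A m) 0) * (0 : Fin n → ℝ) m) + 2 * A p 0) = A p 0 := by
      simp
    rw [hP0] at hgc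
    show A p x = (1/2) * ((∑ j, B j * x j) * x p - B p / 2 * (∑ j, (x j)^2) + c * x p
        + (∑ k, (pd k (A p) 0 - pd p (A k) 0) * x k) + 2 * A p 0)
    linarith
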